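/- arXiv:2502.01192 — 2 statements merged into one kernel-verified Lean document; each statement's English description precedes it below -/
import Mathlib

section
/- Let q be a positive integer, a ∈ ℝ^q, b ∈ ℝ, u ∈ ℤ^q, and let δ > 0. Let (T, U) be a partition of {1,…,q}. Define β = (b − Σ_{j∈U} a_j u_j)/δ, f = β − ⌊β⌋, and for any d ∈ ℝ set f_d = d − ⌊d⌋ and G(d) = ⌊d⌋ + max(f_d − f, 0)/(1 − f). Then for every (s, z) ∈ ℝ × ℤ^q with s ≥ 0, 0 ≤ z_j ≤ u_j for all j, and Σ_{j=1}^q a_j z_j ≤ b + s, the complemented mixed-integer-rounding (c-MIR) inequality holds: Σ_{j∈T} G(a_j/δ) z_j + Σ_{j∈U} G(−a_j/δ)(u_j − z_j) ≤ ⌊β⌋ + s/(δ(1 − f)). -/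
/-!
Each coefficient `d` splits as `d ≥ n - r` with `n` an integer, `r ≥ 0` and
`G(d) = n - r / (1 - f)`: round `d` up when its fractional part exceeds `f`, down otherwise.
Such splittings survive nonnegative integer combinations. After complementing the variables in
`U` and dividing by `δ`, the knapsack row therefore yields an integer `n` and a slack `r ≥ 0`
with `n - (r + s/δ) ≤ β`, and the basic MIR inequality `n - (r + s/δ) / (1 - f) ≤ ⌊β⌋`
is the claim.
-/

open Finset

/-- The paper's `G(d)`, where `f` is the fractional part of the right-hand side. -/
noncomputable def mirCoeff (f d : ℝ) : ℝ :=
  ⌊d⌋ + max (Int.fract d - f) 0 / (1 - f)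

def IsMIRRounding (f y g : ℝ) : Prop :=
  ∃ (n : ℤ) (r : ℝ), 0 ≤ r ∧ (n : ℝ) - r ≤ y ∧ g = n - r / (1 - f)

theorem int_sub_div_one_sub_fract_le_floor {β r : ℝ} {n : ℤ} (hr : 0 ≤ r) (h : n - r ≤ β) :
    n - r / (1 - Int.fract β) ≤ ⌊β⌋ := by
  have hf1 : 0 < 1 - Int.fract β := sub_pos.mpr (Int.fract_lt_one β)
  have hβ := Int.floor_add_fract β
  rcases le_or_gt n ⌊β⌋ with hn | hn
  · have : (n : ℝ) ≤ ⌊β⌋ := by exact_mod_cast hn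
    linarith [div_nonneg hr hf1.le]
  · have hn1 : (⌊β⌋ : ℝ) + 1 ≤ n := by exact_mod_cast hn
    rw [sub_le_iff_le_add, ← sub_le_iff_le_add', le_div_iff₀ hf1]
    nlinarith [Int.fract_nonneg β]

theorem isMIRRounding_mirCoeff {f : ℝ} (hf : f < 1) (d : ℝ) : IsMIRRounding f d (mirCoeff f d) := by
  have hf1 : 1 - f ≠ 0 := (sub_pos.mpr hf).ne'
  have hd := Int.floor_add_fract d
  rcases le_or_gt (Int.fract d) f with h | h
  · refine ⟨⌊d⌋, 0, le_rfl, by linarith [Int.fract_nonneg d], ?_⟩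
    simp [mirCoeff, max_eq_right (sub_nonpos.mpr h)]
  · refine ⟨⌊d⌋ + 1, 1 - Int.fract d, by linarith [Int.fract_lt_one d], by push_cast; linarith, ?_⟩
    rw [mirCoeff, max_eq_left (sub_nonneg.mpr h.le)]
    push_cast
    field_simp
    ring

namespace IsMIRRounding

variable {f : ℝ}

theorem zero : IsMIRRounding f 0 0 :=
  ⟨0, 0, le_rfl, by simp, by simp⟩

theorem add {y₁ y₂ g₁ g₂ : ℝ} (h₁ : IsMIRRounding f y₁ g₁) (h₂ : IsMIRRounding f y₂ g₂) :
    IsMIRRounding f (y₁ + y₂) (g₁ + g₂) := by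
  obtain ⟨n₁, r₁, hr₁, hy₁, rfl⟩ := h₁
  obtain ⟨n₂, r₂, hr₂, hy₂, rfl⟩ := h₂
  exact ⟨n₁ + n₂, r₁ + r₂, add_nonneg hr₁ hr₂, by push_cast; linarith, by push_cast; ring⟩

theorem mul_int {y g : ℝ} (h : IsMIRRounding f y g) {w : ℤ} (hw : 0 ≤ w) :
    IsMIRRounding f (y * w) (g * w) := by
  obtain ⟨n, r, hr, hy, rfl⟩ := h
  have hw' : (0 : ℝ) ≤ w := by exact_mod_cast hw
  exact ⟨n * w, r * w, mul_nonneg hr hw', by push_cast; nlinarith, by push_cast; ring⟩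

theorem sum {ι : Type*} {s : Finset ι} {y g : ι → ℝ} (h : ∀ i ∈ s, IsMIRRounding f (y i) (g i)) :
    IsMIRRounding f (∑ i ∈ s, y i) (∑ i ∈ s, g i) := by
  classical
  induction s using Finset.induction_on with
  | empty => simpa using zero
  | insert i s hi ih =>
    rw [sum_insert hi, sum_insert hi]
    exact (h i (mem_insert_self i s)).add (ih fun j hj => h j (mem_insert_of_mem hj))

theorem le_floor_add_div {y g β s : ℝ} (h : IsMIRRounding (Int.fract β) y g) (hs : 0 ≤ s)
    (hy : y ≤ β + s) : g ≤ ⌊β⌋ + s / (1 - Int.fract β) := by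
  obtain ⟨n, r, hr, hny, rfl⟩ := h
  have := int_sub_div_one_sub_fract_le_floor (β := β) (n := n) (add_nonneg hr hs) (by linarith)
  rw [add_div] at this
  linarith

end IsMIRRounding

theorem cmir_inequality_valid_general
    (q : ℕ)
    (a : Fin q → ℝ) (b : ℝ) (u : Fin q → ℤ)
    (δ : ℝ) (hδ : 0 < δ)
    (T U : Finset (Fin q)) (hTU : T ∪ U = Finset.univ) (hdisj : T ∩ U = ∅)
    (β f : ℝ)
    (hβ : β = (b - ∑ j ∈ U, a j * (u j : ℝ)) / δ)
    (hf : f = β - (⌊β⌋ : ℝ))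
    (G : ℝ → ℝ)
    (hG : ∀ d : ℝ, G d = (⌊d⌋ : ℝ) + max (d - (⌊d⌋ : ℝ) - f) 0 / (1 - f))
    (s : ℝ) (z : Fin q → ℤ)
    (hs : 0 ≤ s) (hz0 : ∀ j, 0 ≤ z j) (hzu : ∀ j, z j ≤ u j)
    (hknap : ∑ j, a j * (z j : ℝ) ≤ b + s) :
    ∑ j ∈ T, G (a j / δ) * (z j : ℝ) +
      ∑ j ∈ U, G (-a j / δ) * ((u j : ℝ) - (z j : ℝ)) ≤
      (⌊β⌋ : ℝ) + s / (δ * (1 - f)) := by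
  rw [Int.self_sub_floor] at hf
  subst hf
  obtain rfl : G = mirCoeff (Int.fract β) := funext hG
  have hround (d : ℝ) := isMIRRounding_mirCoeff (Int.fract_lt_one β) d
  have hT := IsMIRRounding.sum fun j (_ : j ∈ T) => (hround (a j / δ)).mul_int (hz0 j)
  have hU := IsMIRRounding.sum fun j (_ : j ∈ U) =>
    (hround (-a j / δ)).mul_int (sub_nonneg.mpr (hzu j))
  push_cast at hU
  have hsplit : ∑ j, a j * (z j : ℝ) = ∑ j ∈ T, a j * z j + ∑ j ∈ U, a j * z j := by
    rw [← hTU, sum_union (disjoint_iff_inter_eq_empty.mpr hdisj)]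
  have hcomplemented : ∑ j ∈ T, a j / δ * z j + ∑ j ∈ U, -a j / δ * (u j - z j) ≤ β + s / δ := by
    have hrow : ∑ j ∈ T, a j / δ * z j + ∑ j ∈ U, -a j / δ * (u j - z j) =
        (∑ j, a j * z j - ∑ j ∈ U, a j * u j) / δ := by
      rw [hsplit, add_sub_assoc, ← sum_sub_distrib, add_div, sum_div, sum_div]
      congr 1 <;> exact sum_congr rfl fun j _ => by ring
    rw [hrow, hβ, ← add_div]
    gcongr
    linarith
  rw [← div_div]
  exact (hT.add hU).le_floor_add_div (div_nonneg hs hδ.le) hcomplemented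

/-- Validity of the complemented mixed-integer-rounding (c-MIR) inequality for the
mixed knapsack set. -/
theorem cmir_inequality_valid
    (q : ℕ) (hq : 0 < q)
    (a : Fin q → ℝ) (b : ℝ) (u : Fin q → ℤ)
    (δ : ℝ) (hδ : 0 < δ)
    (T U : Finset (Fin q)) (hTU : T ∪ U = Finset.univ) (hdisj : T ∩ U = ∅)
    (β f : ℝ)
    (hβ : β = (b - ∑ j ∈ U, a j * (u j : ℝ)) / δ)
    (hf : f = β - (⌊β⌋ : ℝ))
    (G : ℝ → ℝ)
    (hG : ∀ d : ℝ, G d = (⌊d⌋ : ℝ) + max (d - (⌊d⌋ : ℝ) - f) 0 / (1 - f))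
    (s : ℝ) (z : Fin q → ℤ)
    (hs : 0 ≤ s) (hz0 : ∀ j, 0 ≤ z j) (hzu : ∀ j, z j ≤ u j)
    (hknap : ∑ j, a j * (z j : ℝ) ≤ b + s) :
    ∑ j ∈ T, G (a j / δ) * (z j : ℝ) +
      ∑ j ∈ U, G (-a j / δ) * ((u j : ℝ) - (z j : ℝ)) ≤
      (⌊β⌋ : ℝ) + s / (δ * (1 - f)) :=
  cmir_inequality_valid_general q a b u δ hδ T U hTU hdisj β f hβ hf G hG s z hs hz0 hzu hknap
end

section
/- Let q be a positive integer, a ∈ ℝ^q, b ∈ ℝ. Define f = b − ⌊b⌋, and for d ∈ ℝ set f_d = d − ⌊d⌋ and G(d) = ⌊d⌋ + max(f_d − f, 0)/(1 − f). Then for every (s, z) ∈ ℝ × ℤ^q with s ≥ 0, z_j ≥ 0 for all j, and Σ_{j=1}^q a_j z_j ≤ b + s, the mixed-integer-rounding (MIR) inequality holds: Σ_{j=1}^q G(a_j) z_j ≤ ⌊b⌋ + s/(1 − f). -/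
/-- Validity of the mixed-integer-rounding (MIR) inequality. -/
theorem mir_inequality_valid
    (q : ℕ) (hq : 0 < q)
    (a : Fin q → ℝ) (b : ℝ)
    (f : ℝ) (hf : f = b - (⌊b⌋ : ℝ))
    (G : ℝ → ℝ)
    (hG : ∀ d : ℝ, G d = (⌊d⌋ : ℝ) + max (d - (⌊d⌋ : ℝ) - f) 0 / (1 - f))
    (s : ℝ) (z : Fin q → ℤ)
    (hs : 0 ≤ s) (hz0 : ∀ j, 0 ≤ z j)
    (hknap : ∑ j, a j * (z j : ℝ) ≤ b + s) :
    ∑ j, G (a j) * (z j : ℝ) ≤ (⌊b⌋ : ℝ) + s / (1 - f) := by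
  have hf0 : 0 ≤ f := by rw [hf]; linarith [Int.floor_le b]
  have hf1 : f < 1 := by rw [hf]; linarith [Int.lt_floor_add_one b]
  have h1f : 0 < 1 - f := by linarith
  set w : Fin q → ℤ := fun j => ⌊a j⌋ + (if f < a j - (⌊a j⌋ : ℝ) then 1 else 0) with hw
  set t : Fin q → ℝ := fun j => if f < a j - (⌊a j⌋ : ℝ) then 1 - (a j - (⌊a j⌋ : ℝ)) else 0 with ht
  have ht0 : ∀ j, 0 ≤ t j := by
    intro j; simp only [ht]
    split
    · linarith [Int.lt_floor_add_one (a j)]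
    · exact le_refl 0
  have hGwt : ∀ j, G (a j) = (w j : ℝ) - t j / (1 - f) := by
    intro j
    rw [hG]
    simp only [hw, ht]
    by_cases h : f < a j - (⌊a j⌋ : ℝ)
    · rw [if_pos h, if_pos h, max_eq_left (by linarith)]
      push_cast
      field_simp
      ring
    · rw [if_neg h, if_neg h, max_eq_right (by push_neg at h; linarith)]
      push_cast
      ring
  have hwle : ∀ j, (w j : ℝ) ≤ a j + t j := by
    intro j
    simp only [hw, ht]
    by_cases h : f < a j - (⌊a j⌋ : ℝ)
    · rw [if_pos h, if_pos h]; push_cast; ring_nf; linarith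
    · rw [if_neg h, if_neg h]; push_cast; linarith [Int.floor_le (a j)]
  set T : ℝ := ∑ j, t j * (z j : ℝ) with hT
  have hT0 : 0 ≤ T := by
    apply Finset.sum_nonneg
    intro j _
    exact mul_nonneg (ht0 j) (by exact_mod_cast hz0 j)
  set N : ℤ := ∑ j, w j * z j with hN
  have hNcast : (N : ℝ) = ∑ j, (w j : ℝ) * (z j : ℝ) := by
    rw [hN]; push_cast; rfl
  have hNb : (N : ℝ) ≤ b + (s + T) := by
    rw [hNcast]
    have h1 : ∑ j, (w j : ℝ) * (z j : ℝ) ≤ ∑ j, (a j + t j) * (z j : ℝ) := by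
      apply Finset.sum_le_sum
      intro j _
      exact mul_le_mul_of_nonneg_right (hwle j) (by exact_mod_cast hz0 j)
    have h2 : ∑ j, (a j + t j) * (z j : ℝ) = (∑ j, a j * (z j : ℝ)) + T := by
      rw [hT, ← Finset.sum_add_distrib]
      congr 1; ext j; ring
    linarith
  have key : (N : ℝ) ≤ (⌊b⌋ : ℝ) + (s + T) / (1 - f) := by
    by_cases hNle : N ≤ ⌊b⌋
    · have h1 : (N : ℝ) ≤ (⌊b⌋ : ℝ) := by exact_mod_cast hNle
      have h2 : 0 ≤ (s + T) / (1 - f) := div_nonneg (by linarith) h1f.le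
      linarith
    · push_neg at hNle
      have hN1 : (⌊b⌋ : ℝ) + 1 ≤ (N : ℝ) := by exact_mod_cast hNle
      have hS' : (N : ℝ) - (⌊b⌋ : ℝ) - f ≤ s + T := by
        simp only [hf]; linarith
      rw [← sub_le_iff_le_add', le_div_iff₀ h1f]
      nlinarith [hN1, hS', hf0]
  have hsum : ∑ j, G (a j) * (z j : ℝ) = (N : ℝ) - T / (1 - f) := by
    rw [hNcast, hT, Finset.sum_div, ← Finset.sum_sub_distrib]
    apply Finset.sum_congr rfl
    intro j _
    rw [hGwt j]
    ring
  rw [hsum]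
  have : (s + T) / (1 - f) = s / (1 - f) + T / (1 - f) := add_div s T (1 - f)
  linarith
end
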